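/- Let Γ be a valued constraint language on a finite set D and let f ∈ Pol₁⁺(Γ) be a unary operation in the positive clone of Γ. Then for every instance I = (V, D, 𝒞) of VCSP(Γ), the minimum of Cost_I(s) over all assignments s : V → D is equal to the minimum of Cost_I(s) over all assignments s : V → f(D) taking values in the range of f. -/

import Mathlib

/-! Basic framework for Valued Constraint Satisfaction Problems (VCSP):
operations, clones, weightings, weighted clones, cost functions,
(weighted/fractional) polymorphisms, expressibility and weighted relational clones. -/

/-- A `k`-ary operation on `D`. -/
abbrev Op (D : Type) (k : ℕ) : Type := (Fin k → D) → D

/-- The `i`-th `k`-ary projection on `D`. -/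
def proj (D : Type) {k : ℕ} (i : Fin k) : Op D k := fun x => x i

/-- An operation is a projection. -/
def IsProj {D : Type} {k : ℕ} (f : Op D k) : Prop := ∃ i : Fin k, f = proj D i

/-- Superposition `f[g₁,…,g_k]` of a `k`-ary operation with `k` many `l`-ary operations. -/
def superposeOp {D : Type} {k l : ℕ} (f : Op D k) (g : Fin k → Op D l) : Op D l :=
  fun x => f fun i => g i x

/-- A clone of operations on `D`: contains all projections and is closed under superposition. -/
structure IsClone {D : Type} (C : ∀ k, Set (Op D k)) : Prop where
  proj_mem : ∀ (k : ℕ) (i : Fin k), proj D i ∈ C k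
  superpose_mem : ∀ (k l : ℕ) (f : Op D k) (g : Fin k → Op D l),
    f ∈ C k → (∀ i, g i ∈ C l) → superposeOp f g ∈ C l

/-- A `k`-ary weighting of the clone `C`: a rational-valued function on `k`-ary operations,
vanishing outside `C`, summing to `0`, and negative only on projections. -/
structure IsWeighting {D : Type} [Fintype D] [DecidableEq D] (C : ∀ k, Set (Op D k))
    {k : ℕ} (ω : Op D k → ℚ) : Prop where
  support_mem : ∀ f : Op D k, ω f ≠ 0 → f ∈ C k
  sum_zero : ∑ f : Op D k, ω f = 0
  neg_imp_proj : ∀ f : Op D k, ω f < 0 → IsProj f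

/-- Superposition of a `k`-ary weighting with `k` many `l`-ary operations. -/
def wSuperpose {D : Type} [Fintype D] [DecidableEq D] {k l : ℕ}
    (ω : Op D k → ℚ) (g : Fin k → Op D l) : Op D l → ℚ :=
  fun f' => ∑ f ∈ Finset.univ.filter (fun f : Op D k => superposeOp f g = f'), ω f

/-- A weighted clone over the clone `C`: a nonempty family of weightings of `C` closed under
non-negative scaling, addition of weightings of equal arity and proper superposition. -/
structure IsWeightedClone {D : Type} [Fintype D] [DecidableEq D]
    (C : ∀ k, Set (Op D k)) (W : ∀ k, Set (Op D k → ℚ)) : Prop where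
  clone : IsClone C
  weighting : ∀ (k : ℕ), ∀ ω ∈ W k, IsWeighting C ω
  nonempty : ∃ k, (W k).Nonempty
  scale_mem : ∀ (k : ℕ) (c : ℚ), 0 ≤ c → ∀ ω ∈ W k, (fun f => c * ω f) ∈ W k
  add_mem : ∀ (k : ℕ), ∀ ω₁ ∈ W k, ∀ ω₂ ∈ W k, (fun f => ω₁ f + ω₂ f) ∈ W k
  superpose_mem : ∀ (k l : ℕ), ∀ ω ∈ W k, ∀ g : Fin k → Op D l,
    (∀ i, g i ∈ C l) → IsWeighting C (wSuperpose ω g) → wSuperpose ω g ∈ W l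

/-- The positive clone of a family of weightings: all projections together with all operations
receiving positive weight from some weighting in the family. -/
def posClone {D : Type} [Fintype D] [DecidableEq D] (W : ∀ k, Set (Op D k → ℚ)) :
    ∀ k, Set (Op D k) :=
  fun k => {f | IsProj f ∨ ∃ ω ∈ W k, 0 < ω f}

/-- An `r`-ary cost function on `D`, with values in `ℚ ∪ {∞}`. -/
abbrev CostF (D : Type) (r : ℕ) : Type := (Fin r → D) → WithTop ℚ

/-- The feasibility relation of a cost function. -/
def Feas {D : Type} {r : ℕ} (ϱ : CostF D r) : Set (Fin r → D) := {x | ϱ x ≠ ⊤}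

/-- Coordinate-wise application of a `k`-ary operation to `k` many `r`-tuples. -/
def appRows {D : Type} {k r : ℕ} (f : Op D k) (xs : Fin k → Fin r → D) : Fin r → D :=
  fun j => f fun i => xs i j

/-- `f` is a polymorphism of `ϱ`: `Feas ϱ` is closed under coordinate-wise application of `f`. -/
def IsPolymorphism {D : Type} {k r : ℕ} (f : Op D k) (ϱ : CostF D r) : Prop :=
  ∀ xs : Fin k → Fin r → D, (∀ i, xs i ∈ Feas ϱ) → appRows f xs ∈ Feas ϱ

/-- A valued constraint language on `D`: a set of cost functions of various arities. -/
abbrev VLang (D : Type) : Type := Set (Σ r : ℕ, CostF D r)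

/-- The clone of polymorphisms of a language. -/
def Pol {D : Type} (Γ : VLang D) : ∀ k, Set (Op D k) :=
  fun _ => {f | ∀ ϱ ∈ Γ, IsPolymorphism f ϱ.2}

/-- Multiplication of an element of `ℚ ∪ {∞}` by a rational scalar (`c·∞ = ∞`). -/
def qmul (c : ℚ) (x : WithTop ℚ) : WithTop ℚ := WithTop.map (fun q => c * q) x

/-- The sum `∑_f ω(f)·ϱ(f(x₁,…,x_k))`, over operations with non-zero weight. -/
def wSum {D : Type} [Fintype D] [DecidableEq D] {k r : ℕ}
    (ω : Op D k → ℚ) (ϱ : CostF D r) (xs : Fin k → Fin r → D) : WithTop ℚ :=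
  ∑ f ∈ Finset.univ.filter (fun f : Op D k => ω f ≠ 0), qmul (ω f) (ϱ (appRows f xs))

/-- `ω` is a weighted polymorphism of the language `Γ`. -/
def IsWeightedPolymorphism {D : Type} [Fintype D] [DecidableEq D] (Γ : VLang D)
    {k : ℕ} (ω : Op D k → ℚ) : Prop :=
  IsWeighting (Pol Γ) ω ∧
    ∀ ϱ ∈ Γ, ∀ xs : Fin k → Fin ϱ.1 → D, (∀ i, xs i ∈ Feas ϱ.2) → wSum ω ϱ.2 xs ≤ 0

/-- The weighted polymorphisms of a language. -/
def wPol {D : Type} [Fintype D] [DecidableEq D] (Γ : VLang D) :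
    ∀ k, Set (Op D k → ℚ) :=
  fun _ => {ω | IsWeightedPolymorphism Γ ω}

/-- The positive clone `Pol⁺(Γ)` of a language. -/
def PolPlus {D : Type} [Fintype D] [DecidableEq D] (Γ : VLang D) : ∀ k, Set (Op D k) :=
  posClone (wPol Γ)

/-- The map `D → D` induced by a unary operation. -/
def unaryFun {D : Type} (f : Op D 1) : D → D := fun x => f fun _ => x

/-- A language is a core if every unary operation in its positive clone is bijective. -/
def IsCore {D : Type} [Fintype D] [DecidableEq D] (Γ : VLang D) : Prop :=
  ∀ f ∈ PolPlus Γ 1, Function.Bijective (unaryFun f)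

/-- An idempotent operation. -/
def Idem {D : Type} {k : ℕ} (f : Op D k) : Prop := ∀ x : D, (f fun _ => x) = x

/-- A cyclic operation: `f(x₁,…,x_k) = f(x₂,…,x_k,x₁)`. -/
def CyclicOp {D : Type} {k : ℕ} (f : Op D k) : Prop :=
  ∀ x : Fin k → D, f x = f (x ∘ ⇑(finRotate k))

/-- A conservative operation. -/
def Conservative {D : Type} {k : ℕ} (f : Op D k) : Prop :=
  ∀ x : Fin k → D, ∃ i, f x = x i

/-- A Taylor operation. -/
def IsTaylor {D : Type} {k : ℕ} (t : Op D k) : Prop :=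
  Idem t ∧ ∀ j : Fin k, ∃ a b : Fin k → Fin 2, a j = 0 ∧ b j = 1 ∧
    ∀ u : Fin 2 → D, (t fun i => u (a i)) = t fun i => u (b i)

/-- An instance of `VCSP(Γ)` with variable set `V`: a finite multiset of constraints,
each a tuple of variables together with a cost function from `Γ`. -/
structure VInstance (D : Type) (Γ : VLang D) (V : Type) where
  cons : Multiset (Σ r : ℕ, (Fin r → V) × CostF D r)
  mem_lang : ∀ c ∈ cons, (⟨c.1, c.2.2⟩ : Σ r : ℕ, CostF D r) ∈ Γ

/-- The cost of an assignment for a VCSP instance. -/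
def VInstance.cost {D V : Type} {Γ : VLang D} (I : VInstance D Γ V) (s : V → D) :
    WithTop ℚ :=
  (I.cons.map fun c => c.2.2 fun i => s (c.2.1 i)).sum

/-- A cost function is expressible over a language `Δ`. -/
def Expressible {D : Type} [Fintype D] [DecidableEq D] (Δ : VLang D) {r : ℕ}
    (ϱ : CostF D r) : Prop :=
  ∃ (n : ℕ) (I : VInstance D Δ (Fin n)) (v : Fin r → Fin n),
    ∀ x : Fin r → D,
      ϱ x = (Finset.univ.filter fun s : Fin n → D => ∀ i, s (v i) = x i).inf fun s => I.cost s

/-- A language is closed under expressibility, non-negative scaling and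
addition of rational constants. -/
def IsWClosed {D : Type} [Fintype D] [DecidableEq D] (Δ : VLang D) : Prop :=
  (∀ (r : ℕ) (ϱ : CostF D r), Expressible Δ ϱ → (⟨r, ϱ⟩ : Σ r : ℕ, CostF D r) ∈ Δ) ∧
  (∀ (r : ℕ) (ϱ : CostF D r) (c : ℚ), 0 ≤ c → (⟨r, ϱ⟩ : Σ r : ℕ, CostF D r) ∈ Δ →
    (⟨r, fun x => qmul c (ϱ x)⟩ : Σ r : ℕ, CostF D r) ∈ Δ) ∧
  (∀ (r : ℕ) (ϱ : CostF D r) (c : ℚ), (⟨r, ϱ⟩ : Σ r : ℕ, CostF D r) ∈ Δ →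
    (⟨r, fun x => ϱ x + (c : WithTop ℚ)⟩ : Σ r : ℕ, CostF D r) ∈ Δ)

/-- The weighted relational clone generated by `Γ`: the smallest language containing `Γ`
closed under expressibility, non-negative scaling and addition of rational constants. -/
def wRelClo {D : Type} [Fintype D] [DecidableEq D] (Γ : VLang D) : VLang D :=
  ⋂₀ {Δ : VLang D | Γ ⊆ Δ ∧ IsWClosed Δ}

/-- The weighting `(1/k)(∑_i 1_{f_i} − ∑_i 1_{π_i})` associated with a `k`-tuple of
`k`-ary operations (a multimorphism), weights added with multiplicity. -/
def multimorphismW {D : Type} [Fintype D] [DecidableEq D] {k : ℕ} (F : Fin k → Op D k) :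
    Op D k → ℚ :=
  fun g => (1 / (k : ℚ)) *
    (((Finset.univ.filter fun i : Fin k => F i = g).card : ℚ) -
     ((Finset.univ.filter fun i : Fin k => proj D i = g).card : ℚ))

/-- `Γ` admits the multimorphism `⟨F 0, …, F (k-1)⟩`. -/
def AdmitsMultimorphism {D : Type} [Fintype D] [DecidableEq D] {k : ℕ}
    (Γ : VLang D) (F : Fin k → Op D k) : Prop :=
  multimorphismW F ∈ wPol Γ k

/-- An `m`-ary fractional operation: a probability distribution on `m`-ary operations. -/
def IsFracOp {D : Type} [Fintype D] [DecidableEq D] {m : ℕ} (ω : Op D m → ℝ) : Prop :=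
  (∀ f, 0 ≤ ω f) ∧ ∑ f : Op D m, ω f = 1

/-- Multiplication of an element of `ℚ ∪ {∞}` by a real scalar, landing in `ℝ ∪ {∞}`. -/
def rmul (c : ℝ) (x : WithTop ℚ) : WithTop ℝ := WithTop.map (fun q : ℚ => c * (q : ℝ)) x

/-- `ω` is a fractional polymorphism of the language `Γ`. -/
def IsFracPolymorphism {D : Type} [Fintype D] [DecidableEq D] (Γ : VLang D) {m : ℕ}
    (ω : Op D m → ℝ) : Prop :=
  IsFracOp ω ∧ ∀ ϱ ∈ Γ, ∀ xs : Fin m → Fin ϱ.1 → D, (∀ i, xs i ∈ Feas ϱ.2) →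
    (∑ g ∈ Finset.univ.filter fun g : Op D m => 0 < ω g, rmul (ω g) (ϱ.2 (appRows g xs)))
      ≤ rmul (1 / (m : ℝ)) (∑ i : Fin m, ϱ.2 (xs i))

/-- The positive clone `fPol⁺(Γ)` defined via fractional polymorphisms. -/
def fPolPlus {D : Type} [Fintype D] [DecidableEq D] (Γ : VLang D) : ∀ k, Set (Op D k) :=
  fun k => {f | IsProj f ∨ ∃ ω : Op D k → ℝ, IsFracPolymorphism Γ ω ∧ 0 < ω f}

/-- Application of a binary operation to two elements. -/
def ap2 {D : Type} (f : Op D 2) (a b : D) : D := f ![a, b]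

/-- Application of a ternary operation to three elements. -/
def ap3 {D : Type} (f : Op D 3) (a b c : D) : D := f ![a, b, c]

/-- A ternary operation restricts to a majority operation on a subset `S`. -/
def IsMajorityOn {D : Type} (f : Op D 3) (S : Set D) : Prop :=
  ∀ x ∈ S, ∀ y ∈ S, ap3 f x x y = x ∧ ap3 f x y x = x ∧ ap3 f y x x = x

/-- A ternary operation restricts to a minority operation on a subset `S`. -/
def IsMinorityOn {D : Type} (f : Op D 3) (S : Set D) : Prop :=
  ∀ x ∈ S, ∀ y ∈ S, ap3 f x x y = y ∧ ap3 f x y x = y ∧ ap3 f y x x = y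

/-- The language `Γ_c`: `Γ` together with all unary cost functions `N_a`
(`N_a(a) = 0`, `N_a(x) = ∞` for `x ≠ a`). -/
def withConstants {D : Type} [DecidableEq D] (Γ : VLang D) : VLang D :=
  Γ ∪ {p : Σ r : ℕ, CostF D r |
        ∃ a : D, p = ⟨1, fun x => if x 0 = a then (0 : WithTop ℚ) else ⊤⟩}

/-- A language is conservative if it contains every `{0,1}`-valued unary cost function. -/
def ConservativeLang {D : Type} (Γ : VLang D) : Prop :=
  ∀ ϱ : CostF D 1, (∀ x, ϱ x = 0 ∨ ϱ x = 1) → (⟨1, ϱ⟩ : Σ r : ℕ, CostF D r) ∈ Γ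

/-- The coordinate-wise action of a `k`-ary operation on `A` on the power `A^n`. -/
def opPow {A : Type} (n : ℕ) {k : ℕ} (f : Op A k) : Op (Fin n → A) k :=
  fun xs c => f fun i => xs i c

/-- Regrouping an `(n·r)`-tuple over `A` into an `r`-tuple of elements of `A^n`. -/
def regroup (A : Type) (n r : ℕ) (y : Fin (n * r) → A) : Fin r → Fin n → A :=
  fun j c => y (finProdFinEquiv (c, j))

/-! Let `s` be an optimal assignment of finite cost `m` and let `ω ∈ wPol(Γ)` give `f` positive
weight. Summing the weighted-polymorphism inequality of `ω` over the constraints of `I`, applied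
to the feasible tuples of `s`, gives `∑_g ω(g) · Cost(g ∘ s) ≤ 0`. As `∑_g ω(g) = 0`, this says
`∑_g ω(g) (Cost(g ∘ s) - m) ≤ 0`; the negative weights sit on the identity, where the term
vanishes, and every other term is non-negative by optimality of `s`. Hence
`Cost(f ∘ s) ≤ m`, and `f ∘ s` takes values in the range of `f`. -/

lemma WithTop.multiset_sum_ne_top {M : Type*} [AddCommMonoid M] {s : Multiset (WithTop M)} :
    s.sum ≠ ⊤ ↔ ∀ a ∈ s, a ≠ ⊤ := by
  induction s using Multiset.induction_on <;> simp [*]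

lemma qmul_multiset_sum (c : ℚ) (s : Multiset (WithTop ℚ)) :
    qmul c s.sum = (s.map (qmul c)).sum :=
  map_multiset_sum (AddMonoidHom.mulLeft c).withTopMap s

lemma qmul_coe (c q : ℚ) : qmul c q = ((c * q : ℚ) : WithTop ℚ) := rfl

theorem le_of_sum_mul_nonpos {ι R : Type*} [CommRing R] [LinearOrder R] [IsStrictOrderedRing R]
    {s : Finset ι} {w q : ι → R} {m : R} (hw : ∑ i ∈ s, w i = 0)
    (hneg : ∀ i ∈ s, w i < 0 → q i ≤ m) (hpos : ∀ i ∈ s, 0 < w i → m ≤ q i)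
    (hwq : ∑ i ∈ s, w i * q i ≤ 0) {j : ι} (hj : j ∈ s) (hwj : 0 < w j) : q j ≤ m := by
  have hterm : ∀ i ∈ s, 0 ≤ w i * (q i - m) := fun i hi => by
    rcases lt_trichotomy (w i) 0 with h | h | h
    · exact mul_nonneg_of_nonpos_of_nonpos h.le (sub_nonpos.2 (hneg i hi h))
    · simp [h]
    · exact mul_nonneg h.le (sub_nonneg.2 (hpos i hi h))
  have hsum : ∑ i ∈ s, w i * (q i - m) = ∑ i ∈ s, w i * q i := by
    simp only [mul_sub, Finset.sum_sub_distrib, ← Finset.sum_mul, hw, zero_mul, sub_zero]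
  have hj' : w j * (q j - m) ≤ 0 := (Finset.single_le_sum hterm hj).trans (hsum ▸ hwq)
  exact sub_nonpos.1 (nonpos_of_mul_nonpos_right hj' hwj)

theorem le_of_sum_qmul_nonpos {ι : Type*} {s : Finset ι} {w : ι → ℚ} {Q : ι → WithTop ℚ}
    {m : ℚ} (hQ : ∀ i ∈ s, Q i ≠ ⊤) (hw : ∑ i ∈ s, w i = 0)
    (hneg : ∀ i ∈ s, w i < 0 → Q i ≤ m) (hpos : ∀ i ∈ s, 0 < w i → m ≤ Q i)
    (hwQ : ∑ i ∈ s, qmul (w i) (Q i) ≤ 0) {j : ι} (hj : j ∈ s) (hwj : 0 < w j) : Q j ≤ m := by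
  have hq : ∀ i ∈ s, (((Q i).untopD 0 : ℚ) : WithTop ℚ) = Q i := fun i hi => by
    lift Q i to ℚ using hQ i hi with a
    rfl
  have hwq : ∑ i ∈ s, w i * (Q i).untopD 0 ≤ 0 := by
    have hcoe : ∑ i ∈ s, qmul (w i) (Q i) =
        ((∑ i ∈ s, w i * (Q i).untopD 0 : ℚ) : WithTop ℚ) := by
      rw [WithTop.coe_sum]
      exact Finset.sum_congr rfl fun i hi => by rw [← qmul_coe, hq i hi]
    exact_mod_cast hcoe ▸ hwQ
  rw [← hq j hj]
  refine WithTop.coe_le_coe.2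
    (le_of_sum_mul_nonpos hw (fun i hi h => ?_) (fun i hi h => ?_) hwq hj hwj)
  · exact WithTop.coe_le_coe.1 ((hq i hi).symm ▸ hneg i hi h)
  · exact WithTop.coe_le_coe.1 ((hq i hi).symm ▸ hpos i hi h)

def pointwiseApply {D V : Type} {k : ℕ} (g : Op D k) (ss : Fin k → V → D) : V → D :=
  fun v => g fun i => ss i v

namespace VInstance

variable {D V : Type} {Γ : VLang D} (I : VInstance D Γ V)

lemma mem_feas_of_cost_ne_top {s : V → D} (hs : I.cost s ≠ ⊤) {c} (hc : c ∈ I.cons) :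
    (fun j => s (c.2.1 j)) ∈ Feas c.2.2 :=
  WithTop.multiset_sum_ne_top.1 hs _ (Multiset.mem_map_of_mem _ hc)

lemma cost_pointwiseApply_ne_top {k : ℕ} {g : Op D k} (hg : g ∈ Pol Γ k) {ss : Fin k → V → D}
    (hss : ∀ i, I.cost (ss i) ≠ ⊤) : I.cost (pointwiseApply g ss) ≠ ⊤ := by
  refine WithTop.multiset_sum_ne_top.2 fun a ha => ?_
  obtain ⟨c, hc, rfl⟩ := Multiset.mem_map.1 ha
  exact hg _ (I.mem_lang c hc) _ fun i => I.mem_feas_of_cost_ne_top (hss i) hc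

lemma sum_qmul_cost_pointwiseApply_nonpos [Fintype D] [DecidableEq D] {k : ℕ}
    {ω : Op D k → ℚ} (hω : ω ∈ wPol Γ k) {ss : Fin k → V → D} (hss : ∀ i, I.cost (ss i) ≠ ⊤) :
    ∑ g ∈ Finset.univ.filter (fun g => ω g ≠ 0),
      qmul (ω g) (I.cost (pointwiseApply g ss)) ≤ 0 := by
  have hswap : ∑ g ∈ Finset.univ.filter (fun g => ω g ≠ 0),
        qmul (ω g) (I.cost (pointwiseApply g ss)) =
      (I.cons.map fun c => wSum ω c.2.2 fun i j => ss i (c.2.1 j)).sum := by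
    simp only [cost, qmul_multiset_sum, Multiset.map_map, wSum, Finset.sum_eq_multiset_sum]
    exact Multiset.sum_map_sum_map _ _
  rw [hswap]
  refine Multiset.sum_induction (· ≤ 0) _ (fun _ _ => add_nonpos) le_rfl fun a ha => ?_
  obtain ⟨c, hc, rfl⟩ := Multiset.mem_map.1 ha
  exact hω.2 _ (I.mem_lang c hc) _ fun i => I.mem_feas_of_cost_ne_top (hss i) hc

theorem cost_unaryFun_comp_le_of_forall_le [Fintype D] [DecidableEq D] {f : Op D 1}
    (hf : f ∈ PolPlus Γ 1) {s : V → D} (hs : ∀ t, I.cost s ≤ I.cost t) :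
    I.cost (unaryFun f ∘ s) ≤ I.cost s := by
  rcases hf with ⟨i, rfl⟩ | ⟨ω, hω, hωf⟩
  · exact le_rfl
  obtain hinf | hfin := eq_or_ne (I.cost s) ⊤
  · exact hinf ▸ le_top
  obtain ⟨m, hm⟩ := WithTop.ne_top_iff_exists.1 hfin
  set S := Finset.univ.filter fun g : Op D 1 => ω g ≠ 0
  have hfinite : ∀ g ∈ S, I.cost (pointwiseApply g fun _ => s) ≠ ⊤ := fun g hg =>
    I.cost_pointwiseApply_ne_top (hω.1.support_mem g (Finset.mem_filter.1 hg).2) fun _ => hfin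
  have hproj : ∀ g ∈ S, ω g < 0 → I.cost (pointwiseApply g fun _ => s) ≤ m := fun g _ hg => by
    obtain ⟨j, rfl⟩ := hω.1.neg_imp_proj g hg
    exact hm.ge
  rw [← hm]
  exact le_of_sum_qmul_nonpos hfinite (by rw [Finset.sum_filter_ne_zero]; exact hω.1.sum_zero)
    hproj (fun g _ _ => hm ▸ hs _) (I.sum_qmul_cost_pointwiseApply_nonpos hω fun _ => hfin)
    (by simpa [S] using hωf.ne') hωf

end VInstance

theorem min_cost_eq_min_cost_on_range_general {D : Type} [Fintype D] [DecidableEq D]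
    (Γ : VLang D) (f : Op D 1) (hf : f ∈ PolPlus Γ 1)
    {V : Type} [Fintype V] [DecidableEq V] (I : VInstance D Γ V) :
    (Finset.univ.inf fun s : V → D => I.cost s) =
      (Finset.univ.filter fun s : V → D =>
        ∀ v, s v ∈ Finset.univ.image (unaryFun f)).inf fun s => I.cost s := by
  refine le_antisymm (Finset.inf_mono (Finset.filter_subset _ _)) (Finset.le_inf fun t _ => ?_)
  obtain ⟨s, -, hs⟩ := Finset.exists_min_image Finset.univ I.cost ⟨t, Finset.mem_univ t⟩
  have hrange : unaryFun f ∘ s ∈ Finset.univ.filter fun s : V → D =>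
      ∀ v, s v ∈ Finset.univ.image (unaryFun f) := by
    simp
  calc _ ≤ I.cost (unaryFun f ∘ s) := Finset.inf_le hrange
    _ ≤ I.cost s := I.cost_unaryFun_comp_le_of_forall_le hf fun t => hs t (Finset.mem_univ t)
    _ ≤ I.cost t := hs t (Finset.mem_univ t)

/-- For `f ∈ Pol₁⁺(Γ)`, in any VCSP(Γ) instance the minimum cost over all
assignments equals the minimum cost over assignments taking values in the range of `f`. -/
theorem min_cost_eq_min_cost_on_range {D : Type} [Fintype D] [DecidableEq D] [Nonempty D]
    (Γ : VLang D) (f : Op D 1) (hf : f ∈ PolPlus Γ 1)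
    {V : Type} [Fintype V] [DecidableEq V] (I : VInstance D Γ V) :
    (Finset.univ.inf fun s : V → D => I.cost s) =
      (Finset.univ.filter fun s : V → D =>
        ∀ v, s v ∈ Finset.univ.image (unaryFun f)).inf fun s => I.cost s :=
  min_cost_eq_min_cost_on_range_general Γ f hf I
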